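/- arXiv:0805.0447 — 2 statements merged into one kernel-verified Lean document; each statement's English description precedes it below -/
import Mathlib

section
/- For independent nonnegative integrable random variables X_1,...,X_n, if E[max(X_1,...,X_n)] = (M_1+...+M_n)/n (with M_i the expected maximum of n i.i.d. copies of X_i), then X_1,...,X_n are all identically distributed. -/
/-!
Write `F i` for the distribution function of `X i`. By independence the maximum has distribution
function `∏ i, F i`, while the maximum of `n` i.i.d. copies of `X i` has distribution function
`F i ^ n`; by the layer-cake formula the hypothesis therefore says
`∫ t > 0, (n * (1 - ∏ i, F i t) - ∑ i, (1 - F i t ^ n)) = 0`.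
By AM-GM, `∑ i, F i t ^ n ≥ n * ∏ i, F i t`, so the integrand is nonnegative, hence vanishes for
almost every `t > 0`, and the equality case of AM-GM gives `F i t = F j t` for such `t`.
Distribution functions are right-continuous and vanish on `t < 0`, so `F i = F j` everywhere.
-/

open MeasureTheory ProbabilityTheory Set Topology

section AMGM

variable {ι : Type*} [Fintype ι] {a : ι → ℝ}

private lemma prod_eq_prod_pow_card_rpow (ha : ∀ i, 0 ≤ a i) :
    ∏ i, a i = ∏ i, (a i ^ Fintype.card ι) ^ ((Fintype.card ι : ℝ)⁻¹) := by
  rcases isEmpty_or_nonempty ι with hι | hι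
  · simp
  exact Finset.prod_congr rfl fun i _ =>
    (Real.pow_rpow_inv_natCast (ha i) Fintype.card_ne_zero).symm

lemma card_mul_prod_le_sum_pow (ha : ∀ i, 0 ≤ a i) :
    (Fintype.card ι : ℝ) * ∏ i, a i ≤ ∑ i, a i ^ Fintype.card ι := by
  rcases isEmpty_or_nonempty ι with hι | hι
  · simp
  have hn : (Fintype.card ι : ℝ) ≠ 0 := Nat.cast_ne_zero.mpr Fintype.card_ne_zero
  have := Real.geom_mean_le_arith_mean_weighted Finset.univ (fun _ => (Fintype.card ι : ℝ)⁻¹)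
    (fun i => a i ^ Fintype.card ι) (fun _ _ => by positivity) (by simp [hn])
    (fun i _ => pow_nonneg (ha i) _)
  rw [← prod_eq_prod_pow_card_rpow ha, ← Finset.mul_sum] at this
  rwa [le_inv_mul_iff₀ (by positivity)] at this

lemma eq_of_sum_pow_eq_card_mul_prod (ha : ∀ i, 0 ≤ a i)
    (h : ∑ i, a i ^ Fintype.card ι = Fintype.card ι * ∏ i, a i) (i j : ι) : a i = a j := by
  have : Nonempty ι := ⟨i⟩
  have hn : (Fintype.card ι : ℝ) ≠ 0 := Nat.cast_ne_zero.mpr Fintype.card_ne_zero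
  have := (Real.geom_mean_eq_arith_mean_weighted_iff_of_pos Finset.univ
    (fun _ => (Fintype.card ι : ℝ)⁻¹) (fun i => a i ^ Fintype.card ι) (fun _ _ => by positivity)
    (by simp [hn]) (fun i _ => pow_nonneg (ha i) _)).mp (by
      rw [← prod_eq_prod_pow_card_rpow ha, ← Finset.mul_sum, h, inv_mul_cancel_left₀ hn])
    i (Finset.mem_univ _) j (Finset.mem_univ _)
  exact (pow_left_inj₀ (ha i) (ha j) Fintype.card_ne_zero).mp this

end AMGM

lemma ae_forall_eq_of_card_mul_integral_one_sub_prod_eq {α ι : Type*} [MeasurableSpace α]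
    {μ : Measure α} [Fintype ι] {a : ι → α → ℝ} (ha : ∀ i x, 0 ≤ a i x)
    (hprod : Integrable (fun x => 1 - ∏ i, a i x) μ)
    (hpow : ∀ i, Integrable (fun x => 1 - a i x ^ Fintype.card ι) μ)
    (h : Fintype.card ι * ∫ x, (1 - ∏ i, a i x) ∂μ =
      ∑ i, ∫ x, (1 - a i x ^ Fintype.card ι) ∂μ) :
    ∀ᵐ x ∂μ, ∀ i j, a i x = a j x := by
  set n := Fintype.card ι
  have hdefect : (fun x => ∑ i, a i x ^ n - n * ∏ i, a i x) =
      fun x => n * (1 - ∏ i, a i x) - ∑ i, (1 - a i x ^ n) := by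
    funext x
    simp only [Finset.sum_sub_distrib, Finset.sum_const, Finset.card_univ, nsmul_eq_mul, mul_one]
    ring
  have hint : Integrable (fun x => ∑ i, a i x ^ n - n * ∏ i, a i x) μ :=
    hdefect ▸ (hprod.const_mul n).sub (integrable_finsetSum _ fun i _ => hpow i)
  have hzero : ∫ x, (∑ i, a i x ^ n - n * ∏ i, a i x) ∂μ = 0 := by
    rw [hdefect, integral_sub (hprod.const_mul n) (integrable_finsetSum _ fun i _ => hpow i),
      integral_const_mul, integral_finsetSum _ fun i _ => hpow i, h, sub_self]
  have hnonneg : 0 ≤ fun x => ∑ i, a i x ^ n - n * ∏ i, a i x :=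
    fun x => sub_nonneg.mpr (card_mul_prod_le_sum_pow (ha · x))
  filter_upwards [(integral_eq_zero_iff_of_nonneg hnonneg hint).mp hzero] with x hx
  exact eq_of_sum_pow_eq_card_mul_prod (ha · x) (sub_eq_zero.mp hx)

lemma StieltjesFunction.eq_of_ae_eq {f g : StieltjesFunction ℝ} (h : f =ᵐ[volume] g) :
    f = g := by
  ext x
  set S := {t | f t = g t}
  have hx : x ∈ closure (Ioi x ∩ S) := by
    rw [← closure_closure (s := Ioi x ∩ S)]
    exact closure_mono ((Measure.dense_of_ae h).open_subset_closure_inter isOpen_Ioi)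
      (by rw [closure_Ioi]; exact Set.self_mem_Ici)
  have : (𝓝[Ioi x ∩ S] x).NeBot := mem_closure_iff_nhdsWithin_neBot.mp hx
  have hle : 𝓝[Ioi x ∩ S] x ≤ 𝓝[Ici x] x :=
    nhdsWithin_mono x fun t ht => mem_Ici.mpr (le_of_lt ht.1)
  exact tendsto_nhds_unique_of_eventuallyEq ((f.right_continuous x).mono_left hle)
    ((g.right_continuous x).mono_left hle) (eventually_nhdsWithin_of_forall fun t ht => ht.2)

lemma integrableOn_Ioi_measureReal_lt {α : Type*} [MeasurableSpace α] {μ : Measure α}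
    {f : α → ℝ} (hf : Integrable f μ) (hnn : 0 ≤ᵐ[μ] f) :
    IntegrableOn (fun t => μ.real {a | t < f a}) (Ioi 0) := by
  have hanti : Antitone fun t => μ {a | t < f a} :=
    fun _ _ hst => measure_mono fun _ h => lt_of_le_of_lt hst h
  have hmeas : Measurable fun t => μ.real {a | t < f a} := hanti.measurable.ennreal_toReal
  refine ⟨hmeas.aestronglyMeasurable, ?_⟩
  rw [hasFiniteIntegral_iff_ofReal (ae_of_all _ fun _ => measureReal_nonneg)]
  calc ∫⁻ t in Ioi 0, ENNReal.ofReal (μ.real {a | t < f a})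
      = ∫⁻ t in Ioi 0, μ {a | t < f a} :=
        setLIntegral_congr_fun measurableSet_Ioi fun t ht =>
          ENNReal.ofReal_toReal (hf.measure_gt_lt_top ht).ne
    _ = ∫⁻ a, ENNReal.ofReal (f a) ∂μ :=
        (lintegral_eq_lintegral_meas_lt μ hnn hf.aemeasurable).symm
    _ < ⊤ := hf.lintegral_lt_top

lemma integrable_iSup {α : Type*} [MeasurableSpace α] {μ : Measure α} {ι : Type*} [Fintype ι]
    [Nonempty ι] {f : ι → α → ℝ} (hmeas : ∀ i, Measurable (f i)) (hf : ∀ i, Integrable (f i) μ) :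
    Integrable (fun a => ⨆ i, f i a) μ := by
  refine (integrable_finsetSum Finset.univ fun i _ => (hf i).norm).mono'
    (Measurable.iSup hmeas).aestronglyMeasurable (ae_of_all _ fun a => ?_)
  have hbdd : BddAbove (range fun i => f i a) := (finite_range _).bddAbove
  obtain ⟨i₀⟩ := ‹Nonempty ι›
  have hsingle : ∀ i, ‖f i a‖ ≤ ∑ i, ‖f i a‖ := fun i =>
    Finset.single_le_sum (fun j _ => norm_nonneg (f j a)) (Finset.mem_univ i)
  rw [Real.norm_eq_abs, abs_le]
  constructor
  · exact (neg_le_neg (hsingle i₀)).trans ((neg_abs_le _).trans (le_ciSup hbdd i₀))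
  · exact ciSup_le fun i => (le_abs_self _).trans (hsingle i)

lemma ae_nonneg_iSup {α ι : Type*} [MeasurableSpace α] {μ : Measure α} [Finite ι] [Nonempty ι]
    {f : ι → α → ℝ} (hnn : ∀ i, 0 ≤ᵐ[μ] f i) : 0 ≤ᵐ[μ] fun a => ⨆ i, f i a := by
  obtain ⟨i⟩ := ‹Nonempty ι›
  filter_upwards [ae_all_iff.2 hnn] with a ha
  exact (ha i).trans (le_ciSup (f := fun i => f i a) (finite_range _).bddAbove i)

namespace ProbabilityTheory

section MaxOfIndependent

variable {Ω ι : Type*} [MeasurableSpace Ω] {P : Measure Ω} [IsProbabilityMeasure P]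
  [Fintype ι] [Nonempty ι] {X : ι → Ω → ℝ}

lemma iIndepFun.measureReal_lt_iSup (hX : ∀ i, Measurable (X i)) (hind : iIndepFun X P)
    (t : ℝ) : P.real {ω | t < ⨆ i, X i ω} = 1 - ∏ i, cdf (P.map (X i)) t := by
  have hset : {ω | t < ⨆ i, X i ω} = (⋂ i ∈ (Finset.univ : Finset ι), X i ⁻¹' Iic t)ᶜ := by
    ext ω
    simp [lt_ciSup_iff (finite_range fun i => X i ω).bddAbove]
  rw [hset, measureReal_compl (Finset.measurableSet_biInter _ fun i _ => hX i measurableSet_Iic),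
    probReal_univ, measureReal_def,
    hind.measure_inter_preimage_eq_mul _ fun _ _ => measurableSet_Iic, ENNReal.toReal_prod]
  congr 1
  refine Finset.prod_congr rfl fun i _ => ?_
  have : IsProbabilityMeasure (P.map (X i)) :=
    Measure.isProbabilityMeasure_map (hX i).aemeasurable
  rw [cdf_eq_real, map_measureReal_apply (hX i) measurableSet_Iic, measureReal_def]

lemma iIndepFun.integral_iSup_eq (hX : ∀ i, Measurable (X i)) (hint : ∀ i, Integrable (X i) P)
    (hnn : ∀ i, 0 ≤ᵐ[P] X i) (hind : iIndepFun X P) :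
    ∫ ω, ⨆ i, X i ω ∂P = ∫ t in Ioi 0, (1 - ∏ i, cdf (P.map (X i)) t) := by
  rw [(integrable_iSup hX hint).integral_eq_integral_meas_lt (ae_nonneg_iSup hnn)]
  simp_rw [hind.measureReal_lt_iSup hX]

lemma iIndepFun.integrableOn_one_sub_prod_cdf (hX : ∀ i, Measurable (X i))
    (hint : ∀ i, Integrable (X i) P) (hnn : ∀ i, 0 ≤ᵐ[P] X i) (hind : iIndepFun X P) :
    IntegrableOn (fun t => 1 - ∏ i, cdf (P.map (X i)) t) (Ioi 0) := by
  simpa only [hind.measureReal_lt_iSup hX] using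
    integrableOn_Ioi_measureReal_lt (integrable_iSup hX hint) (ae_nonneg_iSup hnn)

end MaxOfIndependent

section MaxOfIID

variable {ι : Type*} [Fintype ι] {ν : Measure ℝ} [IsProbabilityMeasure ν]

private lemma iIndepFun_eval_pi :
    iIndepFun (fun (j : ι) (v : ι → ℝ) => v j) (Measure.pi fun _ => ν) :=
  iIndepFun_pi (X := fun _ => id) fun _ => aemeasurable_id

private lemma map_eval_pi (j : ι) : (Measure.pi fun _ : ι => ν).map (fun v => v j) = ν :=
  (measurePreserving_eval (fun _ : ι => ν) j).map_eq

private lemma integrable_eval_pi (hint : Integrable id ν) (j : ι) :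
    Integrable (fun v : ι → ℝ => v j) (Measure.pi fun _ => ν) :=
  ((measurePreserving_eval (fun _ : ι => ν) j).integrable_comp aestronglyMeasurable_id).mpr hint

private lemma ae_nonneg_eval_pi (hnn : ∀ᵐ x ∂ν, 0 ≤ x) (j : ι) :
    ∀ᵐ v ∂(Measure.pi fun _ : ι => ν), 0 ≤ v j :=
  (measurePreserving_eval (fun _ : ι => ν) j).quasiMeasurePreserving.ae hnn

variable [Nonempty ι]

lemma integral_iSup_pi_eq (hint : Integrable id ν) (hnn : ∀ᵐ x ∂ν, 0 ≤ x) :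
    ∫ v, ⨆ j, v j ∂(Measure.pi fun _ : ι => ν) =
      ∫ t in Ioi 0, (1 - cdf ν t ^ Fintype.card ι) := by
  rw [iIndepFun_eval_pi.integral_iSup_eq (fun j => measurable_pi_apply j)
    (integrable_eval_pi hint) (ae_nonneg_eval_pi hnn)]
  simp_rw [map_eval_pi, Finset.prod_const, Finset.card_univ]

lemma integrableOn_one_sub_cdf_pow (hint : Integrable id ν) (hnn : ∀ᵐ x ∂ν, 0 ≤ x) :
    IntegrableOn (fun t => 1 - cdf ν t ^ Fintype.card ι) (Ioi 0) := by
  simpa only [map_eval_pi, Finset.prod_const, Finset.card_univ] using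
    iIndepFun_eval_pi.integrableOn_one_sub_prod_cdf (fun j => measurable_pi_apply j)
      (integrable_eval_pi hint) (ae_nonneg_eval_pi hnn)

end MaxOfIID

lemma cdf_eq_zero_of_ae_nonneg {ν : Measure ℝ} [IsProbabilityMeasure ν] (hnn : ∀ᵐ x ∂ν, 0 ≤ x)
    {t : ℝ} (ht : t < 0) : cdf ν t = 0 := by
  rw [cdf_eq_real, measureReal_eq_zero_iff, measure_eq_zero_iff_ae_notMem]
  filter_upwards [hnn] with x hx hxt
  exact absurd (hx.trans_lt (lt_of_le_of_lt hxt ht)) (lt_irrefl 0)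

lemma eq_of_cdf_ae_eq_of_ae_nonneg {μ ν : Measure ℝ} [IsProbabilityMeasure μ]
    [IsProbabilityMeasure ν] (hμ : ∀ᵐ x ∂μ, 0 ≤ x) (hν : ∀ᵐ x ∂ν, 0 ≤ x)
    (h : ∀ᵐ t ∂volume.restrict (Ioi 0), cdf μ t = cdf ν t) : μ = ν := by
  refine Measure.eq_of_cdf μ ν (StieltjesFunction.eq_of_ae_eq ?_)
  filter_upwards [(ae_restrict_iff' measurableSet_Ioi).mp h,
    compl_mem_ae_iff.mpr (measure_singleton (0 : ℝ))] with t hpos hne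
  rcases lt_or_gt_of_ne (hne : t ≠ 0) with ht | ht
  · rw [cdf_eq_zero_of_ae_nonneg hμ ht, cdf_eq_zero_of_ae_nonneg hν ht]
  · exact hpos ht

end ProbabilityTheory

theorem stmt_3 {Ω : Type*} [MeasurableSpace Ω] (P : Measure Ω) [IsProbabilityMeasure P]
    (n : ℕ) (hn : 0 < n) (X : Fin n → Ω → ℝ)
    (hmeas : ∀ i, Measurable (X i))
    (hnonneg : ∀ i ω, 0 ≤ X i ω)
    (hint : ∀ i, Integrable (X i) P)
    (hindep : iIndepFun X P)
    (M : Fin n → ℝ)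
    (hM : ∀ i, M i =
      ∫ v, (⨆ j, v j) ∂(Measure.pi fun _ : Fin n => Measure.map (X i) P))
    (heq : ∫ ω, ⨆ i, X i ω ∂P = (∑ i, M i) / n) :
    ∀ i j, Measure.map (X i) P = Measure.map (X j) P := by
  have : NeZero n := ⟨hn.ne'⟩
  have (i : Fin n) : IsProbabilityMeasure (P.map (X i)) :=
    Measure.isProbabilityMeasure_map (hmeas i).aemeasurable
  have hXnn (i : Fin n) : 0 ≤ᵐ[P] X i := ae_of_all _ (hnonneg i)
  have hlaw_int (i : Fin n) : Integrable id (P.map (X i)) :=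
    (integrable_map_measure aestronglyMeasurable_id (hmeas i).aemeasurable).mpr (hint i)
  have hlaw_nn (i : Fin n) : ∀ᵐ x ∂(P.map (X i)), 0 ≤ x :=
    (ae_map_iff (hmeas i).aemeasurable measurableSet_Ici).mpr (hXnn i)
  have hae : ∀ᵐ t ∂volume.restrict (Ioi 0), ∀ i j,
      cdf (P.map (X i)) t = cdf (P.map (X j)) t := by
    refine ae_forall_eq_of_card_mul_integral_one_sub_prod_eq (fun i t => cdf_nonneg _ t)
      (hindep.integrableOn_one_sub_prod_cdf hmeas hint hXnn)
      (fun i => integrableOn_one_sub_cdf_pow (hlaw_int i) (hlaw_nn i)) ?_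
    rw [← hindep.integral_iSup_eq hmeas hint hXnn, heq, Fintype.card_fin]
    simp only [hM, integral_iSup_pi_eq (hlaw_int _) (hlaw_nn _), Fintype.card_fin]
    field_simp
  exact fun i j =>
    eq_of_cdf_ae_eq_of_ae_nonneg (hlaw_nn i) (hlaw_nn j) (hae.mono fun t ht => ht i j)
end

section
/- Let X_1,...,X_n be independent random variables where each X_i takes value x_i > 0 with probability 1 − p_i and value 0 with probability p_i (so each takes exactly one nonzero value). Set M_i = (1 − p_i^n)·x_i. Then E[max(X_1,...,X_n)] ≤ (1/n)∑_{i=1}^n M_i + ((n−1)/n)·max_i M_i. -/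
/-!
Sort the values decreasingly, `x (σ 0) ≥ x (σ 1) ≥ ⋯`, and let `E i` be the event that `X (σ i)`
is the first of `X (σ 0), X (σ 1), …` to take its nonzero value. Then `max X ≤ ∑ x (σ i) 1_{E i}`
almost surely, so `E[max X] ≤ ∑ r i x (σ i)` with `r i = P (E i)`. The events are disjoint, so
`∑ r i ≤ 1`, and `E i ⊆ {X (σ i) = x (σ i)}`, so `r i ≤ 1 - p (σ i)`. For any `r ≤ 1 - p` the
elementary bound `(1 - p)(1 + (n - 1) pⁿ) ≤ 1 - pⁿ` (compare `1 - pⁿ = (1 - p) ∑_{k<n} pᵏ`) gives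
`n r x ≤ M + (n - 1) r M`, and summing with `M ≤ max M` and `∑ r ≤ 1` yields the claim.
-/

open MeasureTheory ProbabilityTheory Finset
open scoped ENNReal

theorem one_sub_mul_one_add_mul_pow_le {p : ℝ} (hp0 : 0 ≤ p) (hp1 : p ≤ 1) (n : ℕ) :
    (1 - p) * (1 + ((n : ℝ) - 1) * p ^ n) ≤ 1 - p ^ n := by
  have hgeom : 1 + ((n : ℝ) - 1) * p ^ n ≤ ∑ k ∈ range n, p ^ k := by
    induction n with
    | zero => simp
    | succ n ih =>
      have hpow : p ^ (n + 1) ≤ p ^ n := pow_le_pow_of_le_one hp0 hp1 n.le_succ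
      rw [sum_range_succ]
      push_cast
      nlinarith [pow_nonneg hp0 (n + 1), (n.cast_nonneg : (0 : ℝ) ≤ n)]
  rw [← mul_neg_geom_sum]
  exact mul_le_mul_of_nonneg_left hgeom (sub_nonneg.2 hp1)

theorem natCast_mul_le_one_sub_pow_mul {n : ℕ} (hn : 0 < n) {p r : ℝ} (hp0 : 0 ≤ p) (hp1 : p ≤ 1)
    (hr : r ≤ 1 - p) :
    n * r ≤ (1 - p ^ n) * (1 + (n - 1) * r) := by
  have hn1 : (1 : ℝ) ≤ n := by exact_mod_cast hn
  have hc : 0 ≤ 1 + ((n : ℝ) - 1) * p ^ n := by nlinarith [pow_nonneg hp0 n]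
  nlinarith [one_sub_mul_one_add_mul_pow_le hp0 hp1 n, mul_le_mul_of_nonneg_right hr hc]

theorem sum_mul_le_of_le_one_sub {ι : Type*} [Fintype ι] {n : ℕ} (hn : 0 < n)
    {p x r M : ι → ℝ} {m : ℝ} (hp : ∀ i, p i ∈ Set.Icc (0 : ℝ) 1) (hx : ∀ i, 0 ≤ x i)
    (hr0 : ∀ i, 0 ≤ r i) (hr : ∀ i, r i ≤ 1 - p i) (hr1 : ∑ i, r i ≤ 1)
    (hM : ∀ i, M i = (1 - p i ^ n) * x i) (hMm : ∀ i, M i ≤ m) (hm : 0 ≤ m) :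
    ∑ i, r i * x i ≤ (1 / n) * ∑ i, M i + ((n - 1) / n) * m := by
  have hn1 : (0 : ℝ) ≤ n - 1 := by rw [sub_nonneg]; exact_mod_cast hn
  have hterm : ∀ i, n * (r i * x i) ≤ M i + (n - 1) * m * r i := fun i => calc
    n * (r i * x i) = n * r i * x i := by ring
    _ ≤ (1 - p i ^ n) * (1 + (n - 1) * r i) * x i :=
      mul_le_mul_of_nonneg_right
        (natCast_mul_le_one_sub_pow_mul hn (hp i).1 (hp i).2 (hr i)) (hx i)
    _ = M i + (n - 1) * r i * M i := by rw [hM]; ring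
    _ ≤ M i + (n - 1) * m * r i := by
      nlinarith [mul_le_mul_of_nonneg_left (hMm i) (mul_nonneg hn1 (hr0 i))]
  have hsum : n * ∑ i, r i * x i ≤ ∑ i, M i + (n - 1) * m := calc
    n * ∑ i, r i * x i = ∑ i, n * (r i * x i) := mul_sum _ _ _
    _ ≤ ∑ i, (M i + (n - 1) * m * r i) := sum_le_sum fun i _ => hterm i
    _ = ∑ i, M i + (n - 1) * m * ∑ i, r i := by rw [sum_add_distrib, mul_sum]
    _ ≤ ∑ i, M i + (n - 1) * m := by
      linarith [mul_le_of_le_one_right (mul_nonneg hn1 hm) hr1]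
  calc ∑ i, r i * x i = (n * ∑ i, r i * x i) / n := by field_simp
    _ ≤ (∑ i, M i + (n - 1) * m) / n := by gcongr
    _ = (1 / n) * ∑ i, M i + ((n - 1) / n) * m := by ring

theorem measurableSet_disjointed {ι α : Type*} [Preorder ι] [LocallyFiniteOrderBot ι]
    [MeasurableSpace α] {f : ι → Set α} (hf : ∀ i, MeasurableSet (f i)) (i : ι) :
    MeasurableSet (disjointed f i) :=
  disjointedRec (fun _ j ht => ht.diff (hf j)) (hf i)

theorem iSup_le_sum_indicator_disjointed {ι Ω : Type*} [Fintype ι] [LinearOrder ι]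
    [LocallyFiniteOrderBot ι] {Y : ι → Ω → ℝ} {x : ι → ℝ} (hx : Antitone x)
    (hx0 : ∀ i, 0 ≤ x i) {ω : Ω} (hω : ∀ i, Y i ω = 0 ∨ Y i ω = x i) :
    ⨆ i, Y i ω ≤ ∑ i, (disjointed (fun i => Y i ⁻¹' {x i}) i).indicator (fun _ => x i) ω := by
  have hterm0 : ∀ i, 0 ≤ (disjointed (fun i => Y i ⁻¹' {x i}) i).indicator (fun _ => x i) ω :=
    fun i => Set.indicator_nonneg (fun _ _ => hx0 i) ω
  refine Real.iSup_le (fun k => ?_) (sum_nonneg fun i _ => hterm0 i)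
  rcases hω k with hk | hk
  · rw [hk]; exact sum_nonneg fun i _ => hterm0 i
  obtain ⟨i, hik, hfirst⟩ := (Set.toFinite {i | Y i ω = x i}).exists_le_minimal hk
  have hi : ω ∈ disjointed (fun i => Y i ⁻¹' {x i}) i := by
    rw [disjointed_eq_inter_compl]
    exact ⟨hfirst.prop, Set.mem_iInter₂.2 fun j hj hjx => hfirst.not_lt hjx hj⟩
  calc Y k ω = x k := hk
    _ ≤ x i := hx hik
    _ = (disjointed (fun i => Y i ⁻¹' {x i}) i).indicator (fun _ => x i) ω :=
      (Set.indicator_of_mem hi (fun _ => x i)).symm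
    _ ≤ _ := single_le_sum (fun j _ => hterm0 j) (mem_univ i)

theorem integral_iSup_le_sum_measureReal_disjointed {ι Ω : Type*} [Fintype ι] [LinearOrder ι]
    [LocallyFiniteOrderBot ι] [MeasurableSpace Ω] {P : Measure Ω} [IsFiniteMeasure P]
    {Y : ι → Ω → ℝ} {x : ι → ℝ} (hY : ∀ i, Measurable (Y i)) (hx : Antitone x)
    (hx0 : ∀ i, 0 ≤ x i) (hae : ∀ᵐ ω ∂P, ∀ i, Y i ω = 0 ∨ Y i ω = x i) :
    ∫ ω, ⨆ i, Y i ω ∂P ≤ ∑ i, P.real (disjointed (fun i => Y i ⁻¹' {x i}) i) * x i := by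
  have hmeas := measurableSet_disjointed fun i => hY i (measurableSet_singleton (x i))
  calc ∫ ω, ⨆ i, Y i ω ∂P
      ≤ ∫ ω, ∑ i, (disjointed (fun i => Y i ⁻¹' {x i}) i).indicator (fun _ => x i) ω ∂P := by
        refine integral_mono_of_nonneg ?_ ?_ ?_
        · filter_upwards [hae] with ω hω
          exact Real.iSup_nonneg fun i => by rcases hω i with h | h <;> rw [h]; exact hx0 i
        · exact integrable_finsetSum _ fun i _ => (integrable_const _).indicator (hmeas i)
        · filter_upwards [hae] with ω hω
          exact iSup_le_sum_indicator_disjointed hx hx0 hω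
    _ = ∑ i, P.real (disjointed (fun i => Y i ⁻¹' {x i}) i) * x i := by
        rw [integral_finsetSum _ fun i _ => (integrable_const _).indicator (hmeas i)]
        simp_rw [integral_indicator_const _ (hmeas _), smul_eq_mul]

theorem ae_eq_zero_or_eq_of_map_eq {Ω : Type*} [MeasurableSpace Ω] {P : Measure Ω}
    {X : Ω → ℝ} (hX : Measurable X) {a b : ℝ≥0∞} {x : ℝ}
    (h : P.map X = a • Measure.dirac 0 + b • Measure.dirac x) :
    ∀ᵐ ω ∂P, X ω = 0 ∨ X ω = x := by
  have hset : MeasurableSet {y : ℝ | y = 0 ∨ y = x} :=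
    (measurableSet_singleton 0).union (measurableSet_singleton x)
  rw [← ae_map_iff hX.aemeasurable hset, h, ae_add_measure_iff]
  exact ⟨Measure.ae_smul_measure ((ae_dirac_iff hset).2 (Or.inl rfl)) _,
    Measure.ae_smul_measure ((ae_dirac_iff hset).2 (Or.inr rfl)) _⟩

theorem measureReal_preimage_eq_of_map_eq {Ω : Type*} [MeasurableSpace Ω] {P : Measure Ω}
    {X : Ω → ℝ} (hX : Measurable X) {p x : ℝ} (hp : p ≤ 1) (hx : x ≠ 0)
    (h : P.map X = ENNReal.ofReal p • Measure.dirac 0 + ENNReal.ofReal (1 - p) • Measure.dirac x) :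
    P.real (X ⁻¹' {x}) = 1 - p := by
  rw [← map_measureReal_apply hX (measurableSet_singleton x), h]
  simp [measureReal_def, hx.symm, sub_nonneg.2 hp]

theorem stmt_15_general {Ω : Type*} [MeasurableSpace Ω] (P : Measure Ω) [IsProbabilityMeasure P]
    (n : ℕ) (hn : 0 < n) (p x : Fin n → ℝ)
    (hp : ∀ i, p i ∈ Set.Icc (0 : ℝ) 1) (hx : ∀ i, 0 < x i)
    (X : Fin n → Ω → ℝ) (hmeas : ∀ i, Measurable (X i))
    (hlaw : ∀ i, Measure.map (X i) P =
      ENNReal.ofReal (p i) • Measure.dirac 0 +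
        ENNReal.ofReal (1 - p i) • Measure.dirac (x i))
    (M : Fin n → ℝ) (hM : ∀ i, M i = (1 - p i ^ n) * x i) :
    ∫ ω, ⨆ i, X i ω ∂P ≤ (1 / (n : ℝ)) * ∑ i, M i + ((n - 1 : ℝ) / n) * ⨆ i, M i := by
  set σ := Tuple.sort fun i => -x i
  have hanti : Antitone (x ∘ σ) := fun j k hjk => by
    simpa using Tuple.monotone_sort (fun i => -x i) hjk
  set E := disjointed fun i => X (σ i) ⁻¹' {x (σ i)}
  have hae : ∀ᵐ ω ∂P, ∀ i, X i ω = 0 ∨ X i ω = x i :=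
    ae_all_iff.2 fun i => ae_eq_zero_or_eq_of_map_eq (hmeas i) (hlaw i)
  have hmax : ∫ ω, ⨆ i, X i ω ∂P ≤ ∑ i, P.real (E i) * x (σ i) := by
    simp_rw [← σ.iSup_comp (g := fun i => X i _)]
    exact integral_iSup_le_sum_measureReal_disjointed (fun i => hmeas (σ i)) hanti
      (fun i => (hx (σ i)).le) (hae.mono fun ω hω i => hω (σ i))
  have hE1 : ∑ i, P.real (E i) ≤ 1 := by
    rw [← measureReal_iUnion_fintype (disjoint_disjointed _)
      (measurableSet_disjointed fun i => hmeas (σ i) (measurableSet_singleton _))]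
    exact measureReal_le_one
  have hEp : ∀ i, P.real (E i) ≤ 1 - p (σ i) := fun i =>
    (measureReal_mono (disjointed_subset _ i)).trans_eq
      (measureReal_preimage_eq_of_map_eq (hmeas _) (hp _).2 (hx _).ne' (hlaw _))
  have hm0 : 0 ≤ ⨆ i, M i := Real.iSup_nonneg fun i => by
    rw [hM]; exact mul_nonneg (sub_nonneg.2 (pow_le_one₀ (hp i).1 (hp i).2)) (hx i).le
  calc ∫ ω, ⨆ i, X i ω ∂P ≤ ∑ i, P.real (E i) * x (σ i) := hmax
    _ ≤ (1 / n) * ∑ i, M (σ i) + ((n - 1) / n) * ⨆ i, M i :=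
      sum_mul_le_of_le_one_sub hn (fun i => hp (σ i)) (fun i => (hx (σ i)).le)
        (fun _ => measureReal_nonneg) hEp hE1 (fun i => hM (σ i))
        (fun i => le_ciSup (Set.finite_range M).bddAbove (σ i)) hm0
    _ = _ := by rw [Equiv.sum_comp σ M]

theorem stmt_15 {Ω : Type*} [MeasurableSpace Ω] (P : Measure Ω) [IsProbabilityMeasure P]
    (n : ℕ) (hn : 0 < n) (p x : Fin n → ℝ)
    (hp : ∀ i, p i ∈ Set.Icc (0 : ℝ) 1) (hx : ∀ i, 0 < x i)
    (X : Fin n → Ω → ℝ) (hmeas : ∀ i, Measurable (X i))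
    (hlaw : ∀ i, Measure.map (X i) P =
      ENNReal.ofReal (p i) • Measure.dirac 0 +
        ENNReal.ofReal (1 - p i) • Measure.dirac (x i))
    (hindep : iIndepFun X P)
    (M : Fin n → ℝ) (hM : ∀ i, M i = (1 - p i ^ n) * x i) :
    ∫ ω, ⨆ i, X i ω ∂P ≤ (1 / (n : ℝ)) * ∑ i, M i + ((n - 1 : ℝ) / n) * ⨆ i, M i :=
  stmt_15_general P n hn p x hp hx X hmeas hlaw M hM
end
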